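/- arXiv:1809.02995 — 2 statements merged into one kernel-verified Lean document; each statement's English description precedes it below -/
import Mathlib

section
/- Let S be SDD with positive diagonal, D = diag(S), S̃ = D^{-1/2} S D^{-1/2}, Ã = I - S̃, and B̃ = (Ã + I)/2. Then 2·S̃⁺ = (I - B̃)⁺, and for every b orthogonal to ker(S), S̃⁺ D^{-1/2} b = (1/2) ∑_{t=0}^{∞} B̃^t D^{-1/2} b. -/
/-!
Since `I - B̃ = S̃ / 2`, rescaling the four Moore–Penrose identities of `S̃⁺` gives
`2 S̃⁺ = (I - B̃)⁺`.

Gershgorin's theorem for `D⁻¹ S`, which is similar to `S̃`, puts the spectrum of `S̃` in `[0, 2]`,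
so the symmetric matrix `B̃` has its spectrum in `[0, 1]`. In an orthonormal eigenbasis of `B̃` the
vector `c = D^{-1/2} b` has no component along the eigenvalue `1`, because `c ⊥ ker S̃`; hence
`∑ B̃ᵗ c` converges. Its sum `x` satisfies `(I - B̃) x = c` by telescoping and, like every partial
sum, is orthogonal to `ker (I - B̃)`. On that complement the pseudo-inverse undoes `I - B̃`, so
`x = (I - B̃)⁺ c`.
-/

open Matrix

namespace Matrix

variable {m n R : Type*} [Fintype m] [Fintype n]

def IsMoorePenroseInverse [CommRing R] (M : Matrix m n R) (X : Matrix n m R) : Prop :=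
  M * X * M = M ∧ X * M * X = X ∧ (M * X).IsSymm ∧ (X * M).IsSymm

namespace IsMoorePenroseInverse

theorem unique [CommRing R] {M : Matrix m n R} {X Y : Matrix n m R}
    (hX : M.IsMoorePenroseInverse X) (hY : M.IsMoorePenroseInverse Y) : X = Y := by
  obtain ⟨hX1, hX2, hX3, hX4⟩ := hX
  obtain ⟨hY1, hY2, hY3, hY4⟩ := hY
  have hMX : M * X = M * Y := by
    calc M * X = (M * Y) * (M * X) := by rw [← Matrix.mul_assoc, hY1]
    _ = ((M * X) * (M * Y))ᵀ := by rw [transpose_mul, hX3.eq, hY3.eq]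
    _ = M * Y := by rw [← Matrix.mul_assoc, hX1, hY3.eq]
  have hXM : X * M = Y * M := by
    calc X * M = (X * M) * (Y * M) := by rw [Matrix.mul_assoc X, ← Matrix.mul_assoc M, hY1]
    _ = ((Y * M) * (X * M))ᵀ := by rw [transpose_mul, hX4.eq, hY4.eq]
    _ = Y * M := by rw [Matrix.mul_assoc Y, ← Matrix.mul_assoc M, hX1, hY4.eq]
  calc X = X * M * X := hX2.symm
  _ = Y * M * Y := by rw [hXM, Matrix.mul_assoc, hMX, ← Matrix.mul_assoc]
  _ = Y := hY2

theorem smul [Field R] {M : Matrix m n R} {X : Matrix n m R} (hX : M.IsMoorePenroseInverse X)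
    {c : R} (hc : c ≠ 0) : (c • M).IsMoorePenroseInverse (c⁻¹ • X) := by
  obtain ⟨h1, h2, h3, h4⟩ := hX
  have hMX : c • M * c⁻¹ • X = M * X := by
    rw [Matrix.smul_mul, Matrix.mul_smul, smul_smul, mul_inv_cancel₀ hc, one_smul]
  have hXM : c⁻¹ • X * c • M = X * M := by
    rw [Matrix.smul_mul, Matrix.mul_smul, smul_smul, inv_mul_cancel₀ hc, one_smul]
  refine ⟨?_, ?_, ?_, ?_⟩
  · rw [hMX, Matrix.mul_smul, h1]
  · rw [hXM, Matrix.mul_smul, h2]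
  · rwa [hMX]
  · rwa [hXM]

theorem mulVec_mulVec_of_forall_dotProduct_eq_zero
    [Field R] [LinearOrder R] [IsStrictOrderedRing R]
    {M : Matrix m n R} {X : Matrix n m R} (hX : M.IsMoorePenroseInverse X) {x : n → R}
    (hx : ∀ k, M *ᵥ k = 0 → x ⬝ᵥ k = 0) : X *ᵥ (M *ᵥ x) = x := by
  obtain ⟨h1, -, -, h4⟩ := hX
  set y := x - X *ᵥ (M *ᵥ x)
  have hy : M *ᵥ y = 0 := by
    rw [mulVec_sub, mulVec_mulVec, mulVec_mulVec, h1, sub_self]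
  have hyx : y ⬝ᵥ (X *ᵥ (M *ᵥ x)) = 0 := by
    rw [mulVec_mulVec, dotProduct_mulVec, ← mulVec_transpose, h4.eq, ← mulVec_mulVec, hy,
      mulVec_zero, zero_dotProduct]
  have : y ⬝ᵥ y = 0 := by
    rw [dotProduct_sub y x, hyx, dotProduct_comm, hx y hy, sub_zero]
  exact (sub_eq_zero.mp (dotProduct_self_eq_zero.mp this)).symm

end IsMoorePenroseInverse

variable [DecidableEq n]

theorem IsSymm.pow_mulVec_dotProduct_eq_zero {B : Matrix n n ℝ} (hB : B.IsSymm) {c : n → ℝ}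
    (hc : ∀ k, (1 - B) *ᵥ k = 0 → c ⬝ᵥ k = 0) {k : n → ℝ} (hk : (1 - B) *ᵥ k = 0) (t : ℕ) :
    (B ^ t *ᵥ c) ⬝ᵥ k = 0 := by
  have hBk : B *ᵥ k = k := by rwa [sub_mulVec, one_mulVec, sub_eq_zero, eq_comm] at hk
  have hBtk : B ^ t *ᵥ k = k := by
    induction t with
    | zero => rw [pow_zero, one_mulVec]
    | succ t ih => rw [pow_succ, ← mulVec_mulVec, hBk, ih]
  rw [dotProduct_comm, dotProduct_mulVec, ← mulVec_transpose, (hB.pow t).eq, hBtk, dotProduct_comm,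
    hc k hk]

theorem IsSymm.hasSum_pow_mulVec {B X : Matrix n n ℝ} (hB : B.IsSymm)
    (hX : (1 - B).IsMoorePenroseInverse X) {c : n → ℝ}
    (hc : ∀ k, (1 - B) *ᵥ k = 0 → c ⬝ᵥ k = 0) (hsum : Summable fun t ↦ B ^ t *ᵥ c) :
    HasSum (fun t ↦ B ^ t *ᵥ c) (X *ᵥ c) := by
  set x := ∑' t, B ^ t *ᵥ c
  have hx : HasSum (fun t ↦ B ^ t *ᵥ c) x := hsum.hasSum
  have hfix : (1 - B) *ᵥ x = c := by
    have h1 : HasSum (fun t ↦ B ^ (t + 1) *ᵥ c) (x - c) := by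
      simpa using (hasSum_nat_add_iff' 1).mpr hx
    have h2 : HasSum (fun t ↦ B ^ (t + 1) *ᵥ c) (B *ᵥ x) := by
      simpa [pow_succ', ← mulVec_mulVec] using hx.mapL (mulVecLin B).toContinuousLinearMap
    rw [sub_mulVec, one_mulVec, ← h1.unique h2, sub_sub_cancel]
  have hperp : ∀ k, (1 - B) *ᵥ k = 0 → x ⬝ᵥ k = 0 := fun k hk ↦ by
    have := hx.mapL ((dotProductBilin ℝ ℝ).flip k).toContinuousLinearMap
    simp only [LinearMap.coe_toContinuousLinearMap', LinearMap.flip_apply,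
      dotProductBilin_apply_apply, hB.pow_mulVec_dotProduct_eq_zero hc hk] at this
    exact this.unique hasSum_zero
  have hXc := hX.mulVec_mulVec_of_forall_dotProduct_eq_zero hperp
  rw [hfix] at hXc
  rwa [hXc]

theorem IsSymm.summable_pow_mulVec {B : Matrix n n ℝ} (hB : B.IsSymm)
    (hspec : spectrum ℝ B ⊆ Set.Ioc (-1) 1) {c : n → ℝ}
    (hc : ∀ k, (1 - B) *ᵥ k = 0 → c ⬝ᵥ k = 0) : Summable fun t ↦ B ^ t *ᵥ c := by
  have hH : B.IsHermitian := isHermitian_iff_isSymm.mpr hB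
  set v : n → n → ℝ := fun i ↦ ⇑(hH.eigenvectorBasis i)
  set μ := hH.eigenvalues
  have hexp : c = ∑ i, (v i ⬝ᵥ c) • v i := by
    have := congrArg WithLp.ofLp (hH.eigenvectorBasis.sum_repr' (WithLp.toLp 2 c))
    simpa [v, EuclideanSpace.inner_eq_star_dotProduct, dotProduct_comm] using this.symm
  have hBv (i : n) : B *ᵥ v i = μ i • v i := hH.mulVec_eigenvectorBasis i
  have hpow (i : n) (t : ℕ) : B ^ t *ᵥ v i = μ i ^ t • v i := by
    induction t with
    | zero => rw [pow_zero, pow_zero, one_mulVec, one_smul]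
    | succ t ih => rw [pow_succ, ← mulVec_mulVec, hBv, mulVec_smul, ih, smul_smul, pow_succ']
  have hterm (t : ℕ) : B ^ t *ᵥ c = ∑ i, (μ i ^ t * (v i ⬝ᵥ c)) • v i := by
    conv_lhs => rw [hexp]
    simp only [mulVec_sum, mulVec_smul, hpow, smul_smul, mul_comm]
  simp_rw [hterm]
  refine summable_sum fun i _ ↦ ?_
  by_cases h1 : μ i = 1
  · have : v i ⬝ᵥ c = 0 := by
      rw [dotProduct_comm]
      refine hc _ ?_
      rw [sub_mulVec, one_mulVec, hBv, h1, one_smul, sub_self]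
    simp [this]
  · obtain ⟨hlt, hle⟩ := hspec (hH.eigenvalues_mem_spectrum_real i)
    have : |μ i| < 1 := abs_lt.mpr ⟨hlt, lt_of_le_of_ne hle h1⟩
    exact ((summable_geometric_of_abs_lt_one this).mul_right _).smul_const _

theorem IsSymm.diagonal_mul_mul_diagonal {R : Type*} [CommSemiring R] {S : Matrix n n R}
    (hS : S.IsSymm) (d : n → R) : (diagonal d * S * diagonal d).IsSymm := by
  rw [IsSymm, transpose_mul, transpose_mul, diagonal_transpose, hS.eq, Matrix.mul_assoc]

theorem diagonal_mulVec_eq_zero_iff {K : Type*} [Field K] {d : n → K} (hd : ∀ i, d i ≠ 0)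
    {w : n → K} : diagonal d *ᵥ w = 0 ↔ w = 0 := by
  simp [funext_iff, mulVec_diagonal, hd]

theorem diagonal_mulVec_dotProduct_eq_zero {K : Type*} [Field K] {S : Matrix n n K} {d : n → K}
    (hd : ∀ i, d i ≠ 0) {b : n → K} (hb : ∀ y, S *ᵥ y = 0 → b ⬝ᵥ y = 0) {k : n → K}
    (hk : (diagonal d * S * diagonal d) *ᵥ k = 0) : diagonal d *ᵥ b ⬝ᵥ k = 0 := by
  rw [← mulVec_mulVec, ← mulVec_mulVec, diagonal_mulVec_eq_zero_iff hd] at hk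
  rw [← (isSymm_diagonal d).eq, mulVec_transpose, ← dotProduct_mulVec]
  exact hb _ hk

theorem mem_Icc_of_hasEigenvalue_diagonal_inv_mul {S : Matrix n n ℝ} (hpos : ∀ i, 0 < S i i)
    (hSDD : ∀ i, ∑ j ∈ Finset.univ.erase i, |S i j| ≤ S i i) {μ : ℝ}
    (hμ : Module.End.HasEigenvalue (toLin' (diagonal (fun i ↦ (S i i)⁻¹) * S)) μ) :
    μ ∈ Set.Icc 0 2 := by
  obtain ⟨k, hk⟩ := eigenvalue_mem_ball hμ
  have hradius : ∑ j ∈ Finset.univ.erase k, ‖(diagonal (fun i ↦ (S i i)⁻¹) * S) k j‖ ≤ 1 := by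
    simp only [diagonal_mul, norm_mul, Real.norm_eq_abs, abs_inv, abs_of_pos (hpos k),
      ← Finset.mul_sum]
    exact inv_mul_le_one_of_le₀ (hSDD k) (hpos k).le
  rw [diagonal_mul, inv_mul_cancel₀ (hpos k).ne'] at hk
  have := Metric.closedBall_subset_closedBall hradius hk
  rwa [Real.closedBall_eq_Icc, sub_self, one_add_one_eq_two] at this

theorem mem_Icc_of_mulVec_eq_smul {S : Matrix n n ℝ} (hpos : ∀ i, 0 < S i i)
    (hSDD : ∀ i, ∑ j ∈ Finset.univ.erase i, |S i j| ≤ S i i) {v : n → ℝ} (hv : v ≠ 0) {μ : ℝ}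
    (hμ : (diagonal (fun i ↦ (√(S i i))⁻¹) * S * diagonal (fun i ↦ (√(S i i))⁻¹)) *ᵥ v = μ • v) :
    μ ∈ Set.Icc 0 2 := by
  set D := diagonal (fun i ↦ (√(S i i))⁻¹)
  have hD : ∀ i, (√(S i i))⁻¹ ≠ 0 := fun i ↦ inv_ne_zero (Real.sqrt_pos.mpr (hpos i)).ne'
  have hDD : D * D = diagonal (fun i ↦ (S i i)⁻¹) := by
    rw [diagonal_mul_diagonal]
    exact congrArg diagonal (funext fun i ↦ by rw [← mul_inv, Real.mul_self_sqrt (hpos i).le])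
  refine mem_Icc_of_hasEigenvalue_diagonal_inv_mul hpos hSDD
    (Module.End.hasEigenvalue_of_hasEigenvector (x := D *ᵥ v) ⟨?_, ?_⟩)
  · rw [Module.End.mem_eigenspace_iff, toLin'_apply, ← hDD, mulVec_mulVec, Matrix.mul_assoc,
      Matrix.mul_assoc, ← mulVec_mulVec, ← Matrix.mul_assoc, hμ, mulVec_smul]
  · exact fun h ↦ hv ((diagonal_mulVec_eq_zero_iff hD).mp h)

theorem spectrum_one_sub_half_smul_subset_Icc {S : Matrix n n ℝ} (hpos : ∀ i, 0 < S i i)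
    (hSDD : ∀ i, ∑ j ∈ Finset.univ.erase i, |S i j| ≤ S i i) :
    spectrum ℝ (1 - (1 / 2 : ℝ) •
      (diagonal (fun i ↦ (√(S i i))⁻¹) * S * diagonal (fun i ↦ (√(S i i))⁻¹))) ⊆ Set.Icc 0 1 := by
  intro μ hμ
  rw [← spectrum_toLin', ← Module.End.hasEigenvalue_iff_mem_spectrum] at hμ
  obtain ⟨v, hv⟩ := hμ.exists_hasEigenvector
  have hBv := hv.apply_eq_smul
  rw [toLin'_apply, sub_mulVec, one_mulVec, smul_mulVec] at hBv
  have := mem_Icc_of_mulVec_eq_smul hpos hSDD hv.2 (μ := 2 * (1 - μ))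
    (by linear_combination (norm := module) (-2 : ℝ) • hBv)
  constructor <;> linarith [this.1, this.2]

end Matrix

/-- for an SDD matrix `S` with positive diagonal, with
`Stil = D^{-1/2} S D^{-1/2}`, `Atil = I - Stil`, `Btil = (Atil + I)/2`,
the Moore–Penrose pseudo-inverses satisfy `2·Stil⁺ = (I - Btil)⁺`, and for
every `b` orthogonal to `ker S`,
`Stil⁺ D^{-1/2} b = (1/2) ∑_{t=0}^∞ Btil^t D^{-1/2} b`. -/
theorem stmt12 {n : ℕ} [DecidableEq (Fin n)]
    (S : Matrix (Fin n) (Fin n) ℝ) (hsymm : S.IsSymm)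
    (hpos : ∀ i, 0 < S i i)
    (hSDD : ∀ i, ∑ j ∈ Finset.univ.erase i, |S i j| ≤ S i i)
    (Dinvhalf Stil Atil Btil : Matrix (Fin n) (Fin n) ℝ)
    (hDinvhalf : Dinvhalf = Matrix.diagonal (fun i => (Real.sqrt (S i i))⁻¹))
    (hStil : Stil = Dinvhalf * S * Dinvhalf)
    (hAtil : Atil = 1 - Stil)
    (hBtil : Btil = (1 / 2 : ℝ) • (Atil + 1))
    (Sp Qp : Matrix (Fin n) (Fin n) ℝ)
    -- `Sp` is the Moore–Penrose pseudo-inverse of `Stil`: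
    (hS1 : Stil * Sp * Stil = Stil) (hS2 : Sp * Stil * Sp = Sp)
    (hS3 : (Stil * Sp).IsSymm) (hS4 : (Sp * Stil).IsSymm)
    -- `Qp` is the Moore–Penrose pseudo-inverse of `I - Btil`:
    (hQ1 : (1 - Btil) * Qp * (1 - Btil) = 1 - Btil)
    (hQ2 : Qp * (1 - Btil) * Qp = Qp)
    (hQ3 : ((1 - Btil) * Qp).IsSymm) (hQ4 : (Qp * (1 - Btil)).IsSymm) :
    (2 : ℝ) • Sp = Qp ∧
    (∀ b : Fin n → ℝ, (∀ y : Fin n → ℝ, S.mulVec y = 0 → b ⬝ᵥ y = 0) →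
      Sp.mulVec (Dinvhalf.mulVec b) =
        (1 / 2 : ℝ) • ∑' t : ℕ, (Btil ^ t).mulVec (Dinvhalf.mulVec b)) := by
  have hBtil' : Btil = 1 - (1 / 2 : ℝ) • Stil := by rw [hBtil, hAtil]; module
  have hQp : (1 - Btil).IsMoorePenroseInverse Qp := ⟨hQ1, hQ2, hQ3, hQ4⟩
  have h2Sp : (2 : ℝ) • Sp = Qp := by
    refine IsMoorePenroseInverse.unique ?_ hQp
    simpa [hBtil'] using
      (show Stil.IsMoorePenroseInverse Sp from ⟨hS1, hS2, hS3, hS4⟩).smul (c := 1 / 2) (by norm_num)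
  refine ⟨h2Sp, fun b hb ↦ ?_⟩
  subst hDinvhalf hStil
  have hB_symm : Btil.IsSymm := hBtil' ▸ isSymm_one.sub ((hsymm.diagonal_mul_mul_diagonal _).smul _)
  have hspec : spectrum ℝ Btil ⊆ Set.Ioc (-1) 1 := hBtil' ▸
    (spectrum_one_sub_half_smul_subset_Icc hpos hSDD).trans
      (Set.Icc_subset_Ioc (by norm_num) le_rfl)
  have hker : ∀ k, (1 - Btil) *ᵥ k = 0 → _ ⬝ᵥ k = 0 := fun k hk ↦
    diagonal_mulVec_dotProduct_eq_zero (fun i ↦ inv_ne_zero (Real.sqrt_pos.mpr (hpos i)).ne') hb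
      (by rwa [hBtil', sub_sub_cancel, smul_mulVec, smul_eq_zero_iff_right (by norm_num)] at hk)
  have hsum := hB_symm.hasSum_pow_mulVec hQp hker (hB_symm.summable_pow_mulVec hspec hker)
  rw [hsum.tsum_eq, ← h2Sp, smul_mulVec, smul_smul]
  norm_num
end

section
/- Let X be a graph on n/2 vertices with Laplacian L_X satisfying xᵀL_X x ≥ c‖x̄‖² for every x (where x̄ is x minus its mean, i.e., X has spectral gap at least c). Let G consist of two disjoint copies X₁, X₂ of X connected by a perfect matching M between n/k chosen vertices of X₁ and the corresponding vertices of X₂. Then the Laplacian L of G satisfies: for every unit vector x orthogonal to the all-ones vector, xᵀLx ≥ Ω(1/k), i.e., the smallest nonzero eigenvalue of L is Ω(1/k). -/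
/-!
Write `x = (x₁, x₂)` with `x₁, x₂` on the `m` vertices of `X`, and let `V` be the total variance
of the two halves about their own means `a₁`, `a₂`. The quadratic form is at least `c V + T`, where `T` is the matching energy
`∑_{i ∈ C} (x₁ i - x₂ i)²`. Since `x ⊥ 𝟙`, the means are opposite, and `‖x‖ = 1` forces
`m (a₁ - a₂)² = 2 (1 - V)`. On each matched pair, `x₁ i - x₂ i` can only be far from `a₁ - a₂`
if `x₁ i` or `x₂ i` deviates from its mean, so `|C| (a₁ - a₂)² / 2 ≤ T + 2V`; with `|C| = 2m/k`
this gives `k (T + 2V) ≥ 2 (1 - V)`. Hence either `V ≳ 1/k` and the expander term wins, or `V` is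
small and `T ≳ 1/k`.
-/

open Matrix BigOperators

namespace Matrix

variable {m n α : Type*} [Fintype m] [Fintype n]

theorem fromBlocks_zero_zero_mulVec_dotProduct [NonUnitalNonAssocSemiring α]
    (A : Matrix m m α) (D : Matrix n n α) (x : m ⊕ n → α) :
    fromBlocks A 0 0 D *ᵥ x ⬝ᵥ x =
      A *ᵥ (x ∘ Sum.inl) ⬝ᵥ (x ∘ Sum.inl) + D *ᵥ (x ∘ Sum.inr) ⬝ᵥ (x ∘ Sum.inr) := by
  simp [fromBlocks_mulVec, dotProduct, Fintype.sum_sum_type]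

theorem vecMulVec_self_mulVec_dotProduct [CommRing α] (v x : n → α) :
    vecMulVec v v *ᵥ x ⬝ᵥ x = (v ⬝ᵥ x) ^ 2 := by
  rw [vecMulVec_mulVec, op_smul_eq_smul, smul_dotProduct, smul_eq_mul, dotProduct_comm, sq]

end Matrix

section MatchedDouble

variable {ι R : Type*} [Fintype ι] [DecidableEq ι] [CommRing R]

def matchedDoubleLaplacian (LX : Matrix ι ι R) (C : Finset ι) : Matrix (ι ⊕ ι) (ι ⊕ ι) R :=
  fromBlocks LX 0 0 LX +
    ∑ i ∈ C, vecMulVec (Pi.single (Sum.inl i) 1 - Pi.single (Sum.inr i) 1)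
      (Pi.single (Sum.inl i) 1 - Pi.single (Sum.inr i) 1)

theorem matchedDoubleLaplacian_mulVec_dotProduct (LX : Matrix ι ι R) (C : Finset ι)
    (x : ι ⊕ ι → R) :
    matchedDoubleLaplacian LX C *ᵥ x ⬝ᵥ x =
      LX *ᵥ (x ∘ Sum.inl) ⬝ᵥ (x ∘ Sum.inl) + LX *ᵥ (x ∘ Sum.inr) ⬝ᵥ (x ∘ Sum.inr) +
        ∑ i ∈ C, (x (Sum.inl i) - x (Sum.inr i)) ^ 2 := by
  simp only [matchedDoubleLaplacian, add_mulVec, add_dotProduct,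
    fromBlocks_zero_zero_mulVec_dotProduct, sum_mulVec, sum_dotProduct,
    vecMulVec_self_mulVec_dotProduct, sub_dotProduct, single_dotProduct, one_mul]

end MatchedDouble

theorem sum_sq_sub_mean {ι : Type*} [Fintype ι] (y : ι → ℝ) :
    ∑ i, (y i - (∑ j, y j) / Fintype.card ι) ^ 2 =
      ∑ i, y i ^ 2 - (∑ j, y j) ^ 2 / Fintype.card ι := by
  rcases isEmpty_or_nonempty ι with _ | _
  · simp
  have hcard : (Fintype.card ι : ℝ) ≠ 0 := by positivity
  simp only [sub_sq, Finset.sum_add_distrib, Finset.sum_sub_distrib, ← Finset.sum_mul,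
    ← Finset.mul_sum, Finset.sum_const, Finset.card_univ, nsmul_eq_mul]
  field_simp
  ring

theorem sq_sub_div_two_le (p q a b : ℝ) :
    (a - b) ^ 2 / 2 ≤ (p - q) ^ 2 + 2 * ((p - a) ^ 2 + (q - b) ^ 2) := by
  nlinarith [sq_nonneg (p - q + (p - a) - (q - b)), sq_nonneg (p - a + q - b)]

theorem card_mul_sq_sub_div_two_le {ι : Type*} [Fintype ι] (s : Finset ι) (p q : ι → ℝ)
    (a b : ℝ) :
    s.card * (a - b) ^ 2 / 2 ≤
      ∑ i ∈ s, (p i - q i) ^ 2 + 2 * ∑ i, ((p i - a) ^ 2 + (q i - b) ^ 2) := by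
  calc (s.card : ℝ) * (a - b) ^ 2 / 2
      ≤ ∑ i ∈ s, ((p i - q i) ^ 2 + 2 * ((p i - a) ^ 2 + (q i - b) ^ 2)) := by
        rw [mul_div_assoc, ← nsmul_eq_mul, ← Finset.sum_const]
        exact Finset.sum_le_sum fun i _ => sq_sub_div_two_le _ _ _ _
    _ ≤ _ := by
        rw [Finset.sum_add_distrib, ← Finset.mul_sum]
        gcongr
        exact s.subset_univ

-- Weighting `h` by `min c 1 / 4` absorbs its `V`-terms into `c V`, so no case split is needed.
theorem min_div_two_div_le (c k V T : ℝ) (hc : 0 < c) (hk : 1 ≤ k) (hV : 0 ≤ V) (hT : 0 ≤ T)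
    (h : 2 * (1 - V) ≤ k * (T + 2 * V)) : min c 1 / 2 / k ≤ c * V + T := by
  have hl : 0 < min c 1 := lt_min hc one_pos
  have hlc : min c 1 ≤ c := min_le_left c 1
  have hl1 : min c 1 ≤ 1 := min_le_right c 1
  rw [div_le_iff₀ (by linarith)]
  nlinarith [mul_le_mul_of_nonneg_left h hl.le, mul_nonneg (mul_nonneg hV (sub_nonneg.2 hk)) hl.le,
    mul_nonneg (mul_nonneg hV (by linarith : (0:ℝ) ≤ k)) (sub_nonneg.2 hlc),
    mul_nonneg (mul_nonneg hT (by linarith : (0:ℝ) ≤ k)) (sub_nonneg.2 hl1)]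

theorem min_div_two_div_le_matchedDoubleLaplacian {ι : Type*} [Fintype ι] [DecidableEq ι]
    {c : ℝ} (hc : 0 < c) {k : ℕ} (hk : 1 ≤ k) (LX : Matrix ι ι ℝ)
    (hgap : ∀ y : ι → ℝ,
      c * ∑ i, (y i - (∑ j, y j) / Fintype.card ι) ^ 2 ≤ LX *ᵥ y ⬝ᵥ y)
    (C : Finset ι) (hC : C.card * k = 2 * Fintype.card ι)
    (x : ι ⊕ ι → ℝ) (hx : x ⬝ᵥ x = 1) (hone : x ⬝ᵥ (fun _ => 1) = 0) :
    min c 1 / 2 / k ≤ matchedDoubleLaplacian LX C *ᵥ x ⬝ᵥ x := by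
  rw [matchedDoubleLaplacian_mulVec_dotProduct]
  set m : ℝ := (Fintype.card ι : ℝ)
  set x₁ := x ∘ Sum.inl
  set x₂ := x ∘ Sum.inr
  set a₁ := (∑ j, x₁ j) / m
  set a₂ := (∑ j, x₂ j) / m
  set V := ∑ i, (x₁ i - a₁) ^ 2 + ∑ i, (x₂ i - a₂) ^ 2
  set T := ∑ i ∈ C, (x₁ i - x₂ i) ^ 2
  have hnorm : ∑ i, x₁ i ^ 2 + ∑ i, x₂ i ^ 2 = 1 := by
    simpa [dotProduct, Fintype.sum_sum_type, ← sq, x₁, x₂] using hx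
  have hsum : ∑ i, x₁ i + ∑ i, x₂ i = 0 := by
    simpa [dotProduct, Fintype.sum_sum_type, x₁, x₂] using hone
  have hm : m ≠ 0 := by
    intro hm
    have : IsEmpty ι := Fintype.card_eq_zero_iff.1 (Nat.cast_eq_zero.1 hm)
    simp [dotProduct] at hx
  have hmatch : C.card * (a₁ - a₂) ^ 2 / 2 ≤ T + 2 * V := by
    simpa [V, Finset.sum_add_distrib] using card_mul_sq_sub_div_two_le C x₁ x₂ a₁ a₂
  have hgapV : c * V ≤ LX *ᵥ x₁ ⬝ᵥ x₁ + LX *ᵥ x₂ ⬝ᵥ x₂ := by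
    rw [mul_add]; exact add_le_add (hgap x₁) (hgap x₂)
  have hV : V = 1 - ((∑ i, x₁ i) ^ 2 + (∑ i, x₂ i) ^ 2) / m := by
    simp only [V, a₁, a₂, m, sum_sq_sub_mean]
    linear_combination hnorm
  have hCk : (C.card : ℝ) * k = 2 * m := by simp only [m]; exact_mod_cast hC
  have hkey : 2 * (1 - V) ≤ k * (T + 2 * V) := by
    calc 2 * (1 - V) = k * (C.card * (a₁ - a₂) ^ 2 / 2) := by
          simp only [hV, a₁, a₂, eq_neg_of_add_eq_zero_right hsum]
          field_simp
          linear_combination (-4 * (∑ i, x₁ i) ^ 2) * hCk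
      _ ≤ k * (T + 2 * V) := by gcongr
  exact (min_div_two_div_le c k V T hc (by exact_mod_cast hk) (by positivity) (by positivity)
    hkey).trans (add_le_add hgapV le_rfl)

/-- let `X` be a graph on `m = n/2` vertices whose Laplacian `LX`
has spectral gap at least `c` (i.e. `xᵀ LX x ≥ c‖x̄‖²` where `x̄` is `x` minus
its mean). Form `G` from two disjoint copies of `X` joined by a perfect matching
on a set `C` of `n/k` corresponding vertices. Then there is `ε > 0` (depending
only on `c`) such that for every unit vector `x` orthogonal to the all-ones
vector, `xᵀ L x ≥ ε/k`, i.e. the smallest nonzero eigenvalue of `L` is `Ω(1/k)`. -/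
theorem stmt16 (c : ℝ) (hc : 0 < c) :
    ∃ ε : ℝ, 0 < ε ∧
      ∀ (m k : ℕ), 1 ≤ m → 1 ≤ k →
      ∀ (LX : Matrix (Fin m) (Fin m) ℝ), LX.IsSymm →
        LX.mulVec (fun _ => 1) = 0 →
        (∀ y : Fin m → ℝ,
          c * (∑ i, (y i - (∑ j, y j) / m) ^ 2) ≤ LX.mulVec y ⬝ᵥ y) →
      ∀ (C : Finset (Fin m)), C.card * k = 2 * m →
      ∀ (L : Matrix (Fin m ⊕ Fin m) (Fin m ⊕ Fin m) ℝ),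
        L = Matrix.fromBlocks LX 0 0 LX +
          ∑ i ∈ C,
            Matrix.vecMulVec
              ((Pi.single (Sum.inl i) 1 - Pi.single (Sum.inr i) 1 : (Fin m ⊕ Fin m) → ℝ))
              ((Pi.single (Sum.inl i) 1 - Pi.single (Sum.inr i) 1 : (Fin m ⊕ Fin m) → ℝ)) →
      ∀ x : (Fin m ⊕ Fin m) → ℝ, x ⬝ᵥ x = 1 → x ⬝ᵥ (fun _ => 1) = 0 →
        ε / k ≤ L.mulVec x ⬝ᵥ x := by
  refine ⟨min c 1 / 2, by positivity, ?_⟩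
  intro m k _ hk LX _ _ hgap C hC L hL x hx hone
  subst hL
  exact min_div_two_div_le_matchedDoubleLaplacian hc hk LX
    (by simpa only [Fintype.card_fin] using hgap) C (by rwa [Fintype.card_fin]) x hx hone
end
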